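/- arXiv:2111.15099 — 2 statements merged into one kernel-verified Lean document; each statement's English description precedes it below -/
import Mathlib

section
/- Under the same hypotheses, define g₀(x) = x + η₀∇u₀(x) where ∇u₀ exists and g₀(x) = x otherwise. Then T₁ := T₀ ∘ g₀ is an optimal transport map for the pair (μ̃, ν) where μ̃ = (f₀)_#μ, and the minimal transport length satisfies ℓ₀(T₁) ≥ ℓ₀(T₀) − η₀. -/
/-!
The Kantorovich potential saturates `u₀ x - u₀ (T₀ x) = ‖x - T₀ x‖` for `μ`-a.e. `x`, so `u₀` has
slope one along the segment from `T₀ x` to `x`. Where `u₀` is differentiable at `x`, its gradient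
is the unit direction of this transport ray; since `η₀ < ‖x - T₀ x‖`, the point
`f₀ x = x - η₀ • ∇u₀ x` lies strictly inside the ray, where `u₀` is again differentiable with the
same gradient. Hence `g₀ ∘ f₀ = id` a.e., so `(g₀)_# μ̃ = μ` and `T₀ ∘ g₀` pushes `μ̃` to `ν`.
Along `f₀` the potential and the transport length both drop by exactly `η₀`, so the dual value of
`u₀` for `(μ̃, ν)` equals the cost of `T₀ ∘ g₀`, which forces optimality by weak duality; convexity
of `Ω` keeps `f₀ x` in `Ω`, which makes all the integrals finite.
-/

open MeasureTheory

noncomputable section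

abbrev Euc (d : ℕ) := EuclideanSpace ℝ (Fin d)

/-- The Wasserstein-1 distance, defined through Kantorovich–Rubinstein duality. -/
def W1 {d : ℕ} (μ ν : Measure (Euc d)) : ℝ :=
  sSup {r : ℝ | ∃ u : Euc d → ℝ, LipschitzWith 1 u ∧ r = (∫ x, u x ∂μ) - ∫ y, u y ∂ν}

def IsKantorovichPotential {d : ℕ} (u : Euc d → ℝ) (μ ν : Measure (Euc d)) : Prop :=
  LipschitzWith 1 u ∧ (∫ x, u x ∂μ) - ∫ y, u y ∂ν = W1 μ ν

def IsOptimalMap {d : ℕ} (T : Euc d → Euc d) (μ ν : Measure (Euc d)) : Prop :=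
  Measure.map T μ = ν ∧ (∫ x, ‖x - T x‖ ∂μ) = W1 μ ν

/-- The minimal transport length `ℓ₀(T) = essinf_μ |Id - T|`. -/
def ell0 {d : ℕ} (T : Euc d → Euc d) (μ : Measure (Euc d)) : ℝ :=
  essInf (fun x => ‖x - T x‖) μ

open Set Filter Topology
open scoped RealInnerProductSpace

theorem LipschitzWith.sub_le_norm_sub {E : Type*} [SeminormedAddCommGroup E] {u : E → ℝ}
    (hu : LipschitzWith 1 u) (a b : E) : u a - u b ≤ ‖a - b‖ := by
  simpa using (le_abs_self _).trans (hu.norm_sub_le a b)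

theorem LipschitzWith.apply_sub_smul_of_ray {E : Type*} [SeminormedAddCommGroup E]
    [NormedSpace ℝ E] {u : E → ℝ} (hu : LipschitzWith 1 u) {x v : E} (hv : ‖v‖ = 1) {t r : ℝ}
    (hray : u x - u (x - t • v) = t) (hr : 0 ≤ r) (hrt : r ≤ t) :
    u (x - r • v) = u x - r := by
  have h₁ := hu.sub_le_norm_sub x (x - r • v)
  have h₂ := hu.sub_le_norm_sub (x - r • v) (x - t • v)
  rw [sub_sub_cancel, norm_smul, hv, Real.norm_of_nonneg hr, mul_one] at h₁
  rw [sub_sub_sub_cancel_left, ← sub_smul, norm_smul, hv, Real.norm_of_nonneg (by linarith),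
    mul_one] at h₂
  linarith

section Ray

variable {E : Type*} [NormedAddCommGroup E] [InnerProductSpace ℝ E]

theorem eq_of_norm_le_one_of_inner_eq_one {g v : E} (hg : ‖g‖ ≤ 1) (hv : ‖v‖ = 1)
    (hgv : ⟪g, v⟫ = 1) : g = v := by
  have h : ‖g - v‖ ^ 2 ≤ 0 := by
    rw [norm_sub_sq_real, hgv, hv]
    nlinarith [norm_nonneg g]
  exact sub_eq_zero.mp (norm_eq_zero.mp (pow_eq_zero_iff two_ne_zero |>.mp
    (le_antisymm h (sq_nonneg _))))

theorem norm_smul_add_le_of_norm_eq_one {v : E} (hv : ‖v‖ = 1) {t : ℝ} (ht : 0 < t) (h : E) :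
    ‖t • v + h‖ ≤ t + ⟪v, h⟫ + ‖h‖ ^ 2 / (2 * t) := by
  have hvh : -‖h‖ ≤ ⟪v, h⟫ := by
    simpa [hv] using neg_le_of_abs_le (abs_real_inner_le_norm v h)
  have hrhs : 0 ≤ t + ⟪v, h⟫ + ‖h‖ ^ 2 / (2 * t) := by
    have : t - ‖h‖ + ‖h‖ ^ 2 / (2 * t) = ((t - ‖h‖) ^ 2 + t ^ 2) / (2 * t) := by
      field_simp; ring
    have : 0 ≤ ((t - ‖h‖) ^ 2 + t ^ 2) / (2 * t) := by positivity
    linarith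
  refine le_of_pow_le_pow_left₀ two_ne_zero hrhs ?_
  have hsq : ‖t • v + h‖ ^ 2 = t ^ 2 + 2 * t * ⟪v, h⟫ + ‖h‖ ^ 2 := by
    rw [norm_add_sq_real, norm_smul, real_inner_smul_left, hv, Real.norm_of_nonneg ht.le]
    ring
  have hexp : (t + ⟪v, h⟫ + ‖h‖ ^ 2 / (2 * t)) ^ 2 =
      t ^ 2 + 2 * t * ⟪v, h⟫ + ‖h‖ ^ 2 + (⟪v, h⟫ + ‖h‖ ^ 2 / (2 * t)) ^ 2 := by
    field_simp; ring
  rw [hsq, hexp]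
  nlinarith [sq_nonneg (⟪v, h⟫ + ‖h‖ ^ 2 / (2 * t))]

variable [CompleteSpace E]

theorem LipschitzWith.norm_gradient_le {u : E → ℝ} (hu : LipschitzWith 1 u) (x : E) :
    ‖gradient u x‖ ≤ 1 := by
  rw [gradient, LinearIsometryEquiv.norm_map]
  simpa using norm_fderiv_le_of_lipschitz ℝ hu

/-- Near `z`, `u` is squeezed between the cones `u z - t + ‖· - (z - t • v)‖` and
`u z + s - ‖· - (z + s • v)‖`, both of which agree with `u z + ⟪v, · - z⟫` to second order. -/
theorem LipschitzWith.hasGradientAt_of_ray {u : E → ℝ} (hu : LipschitzWith 1 u) {z v : E}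
    (hv : ‖v‖ = 1) {s t : ℝ} (hs : 0 < s) (ht : 0 < t)
    (hfwd : u (z + s • v) - u z = s) (hbwd : u z - u (z - t • v) = t) :
    HasGradientAt u v z := by
  have hbound : ∀ h : E, ‖u (z + h) - u z - ⟪v, h⟫‖ ≤
      (1 / (2 * s) + 1 / (2 * t)) * ‖‖h‖ ^ 2‖ := by
    intro h
    have hup := hu.sub_le_norm_sub (z + h) (z - t • v)
    have hlow := hu.sub_le_norm_sub (z + s • v) (z + h)
    rw [show z + h - (z - t • v) = t • v + h by abel] at hup
    rw [show z + s • v - (z + h) = s • v + -h by abel] at hlow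
    have hup' := norm_smul_add_le_of_norm_eq_one hv ht h
    have hlow' := norm_smul_add_le_of_norm_eq_one hv hs (-h)
    rw [inner_neg_right, norm_neg] at hlow'
    have hs' : 0 ≤ ‖h‖ ^ 2 / (2 * s) := by positivity
    have ht' : 0 ≤ ‖h‖ ^ 2 / (2 * t) := by positivity
    rw [norm_pow, norm_norm, show (1 / (2 * s) + 1 / (2 * t)) * ‖h‖ ^ 2 =
      ‖h‖ ^ 2 / (2 * s) + ‖h‖ ^ 2 / (2 * t) by ring, Real.norm_eq_abs, abs_le]
    constructor <;> linarith
  rw [hasGradientAt_iff_hasFDerivAt, hasFDerivAt_iff_isLittleO_nhds_zero]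
  have hquad : (fun h => u (z + h) - u z - InnerProductSpace.toDual ℝ E v h) =O[𝓝 0]
      fun h => ‖h‖ ^ 2 :=
    Asymptotics.IsBigO.of_bound _ (Eventually.of_forall fun h => by
      simpa [InnerProductSpace.toDual_apply_apply] using hbound h)
  exact hquad.trans_isLittleO (Asymptotics.isLittleO_norm_pow_id one_lt_two)

theorem LipschitzWith.gradient_eq_of_ray {u : E → ℝ} (hu : LipschitzWith 1 u) {x v : E}
    (hv : ‖v‖ = 1) {t : ℝ} (ht : 0 < t) (hray : u x - u (x - t • v) = t)
    (hd : DifferentiableAt ℝ u x) : gradient u x = v := by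
  let φ : ℝ → ℝ := fun r => u (x - r • v)
  have hline : HasDerivAt (fun r : ℝ => x - r • v) (-v) 0 := by
    simpa using ((hasDerivAt_id (0 : ℝ)).smul_const v).const_sub x
  have hφ : HasDerivAt φ (-⟪gradient u x, v⟫) 0 := by
    refine (hd.hasGradientAt.hasFDerivAt.comp_hasDerivAt_of_eq 0 hline (by simp)).congr_deriv ?_
    rw [InnerProductSpace.toDual_apply_apply, inner_neg_right]
  have hφ' : HasDerivWithinAt φ (-1) (Ici 0) 0 := by
    refine ((hasDerivAt_id (0 : ℝ)).const_sub (u x)).hasDerivWithinAt.congr_of_eventuallyEq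
      ?_ (by simp [φ])
    filter_upwards [Icc_mem_nhdsGE ht] with r hr
    exact hu.apply_sub_smul_of_ray hv hray hr.1 hr.2
  have hslope : ⟪gradient u x, v⟫ = 1 := by
    have := (uniqueDiffWithinAt_Ici 0).eq_deriv _ hφ.hasDerivWithinAt hφ'
    linarith
  exact eq_of_norm_le_one_of_inner_eq_one (hu.norm_gradient_le x) hv hslope

theorem LipschitzWith.step_along_ray {u : E → ℝ} (hu : LipschitzWith 1 u) {x y : E}
    (hxy : u x - u y = ‖x - y‖) (hd : DifferentiableAt ℝ u x) {η : ℝ} (hη : 0 < η)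
    (hηxy : η < ‖x - y‖) :
    HasGradientAt u (gradient u x) (x - η • gradient u x) ∧
      u (x - η • gradient u x) = u x - η ∧
      ‖x - η • gradient u x - y‖ = ‖x - y‖ - η ∧
      x - η • gradient u x ∈ segment ℝ x y := by
  set ℓ := ‖x - y‖ with hℓ
  have hℓpos : 0 < ℓ := hη.trans hηxy
  set v := ℓ⁻¹ • (x - y) with hvdef
  have hv : ‖v‖ = 1 := by
    rw [hvdef, norm_smul, norm_inv, Real.norm_of_nonneg hℓpos.le, ← hℓ,
      inv_mul_cancel₀ hℓpos.ne']
  have hy : y = x - ℓ • v := by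
    rw [hvdef, smul_smul, mul_inv_cancel₀ hℓpos.ne', one_smul, sub_sub_cancel]
  have hray : u x - u (x - ℓ • v) = ℓ := by rw [← hy, hxy]
  have hgrad : gradient u x = v := hu.gradient_eq_of_ray hv hℓpos hray hd
  have hz : u (x - η • v) = u x - η := hu.apply_sub_smul_of_ray hv hray hη.le hηxy.le
  have hzy : x - η • v - y = (ℓ - η) • v := by rw [hy, sub_smul]; abel
  rw [hgrad]
  refine ⟨hu.hasGradientAt_of_ray hv hη (sub_pos.mpr hηxy) ?_ ?_, hz, ?_, ?_⟩
  · rw [sub_add_cancel, hz]; ring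
  · rw [show x - η • v - (ℓ - η) • v = x - ℓ • v by rw [sub_smul]; abel, hz]; linarith
  · rw [hzy, norm_smul, hv, mul_one, Real.norm_of_nonneg (sub_pos.mpr hηxy).le]
  · rw [segment_eq_image']
    refine ⟨η / ℓ, ⟨by positivity, (div_le_one hℓpos).mpr hηxy.le⟩, ?_⟩
    simp only [hvdef, smul_smul, ← neg_sub x y, smul_neg, div_eq_mul_inv, sub_eq_add_neg]

end Ray

section PushForward

variable {α β : Type*} [MeasurableSpace α] [MeasurableSpace β] {μ : Measure α}
  {f : α → β} {g : β → α}

theorem map_map_eq_self_of_ae_leftInverse (hf : Measurable f) (hg : Measurable g)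
    (hgf : ∀ᵐ x ∂μ, g (f x) = x) : (μ.map f).map g = μ := by
  have hgf' : g ∘ f =ᵐ[μ] id := hgf
  rw [Measure.map_map hg hf, Measure.map_congr hgf', Measure.map_id]

theorem ae_map_of_ae_leftInverse [MeasurableEq β] (hf : Measurable f) (hg : Measurable g)
    (hgf : ∀ᵐ x ∂μ, g (f x) = x) {p : α → Prop} (hp : ∀ᵐ x ∂μ, p x) :
    ∀ᵐ y ∂μ.map f, f (g y) = y ∧ p (g y) := by
  refine Eventually.and ?_ (ae_of_ae_map hg.aemeasurable ?_)
  · refine (ae_map_iff hf.aemeasurable (measurableSet_eq_fun (hf.comp hg) measurable_id)).mpr ?_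
    filter_upwards [hgf] with x hx
    rw [Function.comp_apply, hx, id]
  · rwa [map_map_eq_self_of_ae_leftInverse hf hg hgf]

theorem integral_eq_integral_map_sub_const {ν : Measure β} [IsProbabilityMeasure ν]
    (hg : AEMeasurable g ν) {F : β → ℝ} {G : α → ℝ} (hG : Integrable G (ν.map g)) {c : ℝ}
    (h : ∀ᵐ y ∂ν, F y = G (g y) - c) : ∫ y, F y ∂ν = ∫ x, G x ∂(ν.map g) - c := by
  have hGg : Integrable (fun y => G (g y)) ν := (integrable_map_measure hG.1 hg).mp hG
  rw [integral_congr_ae h, integral_sub hGg (integrable_const c), integral_const, probReal_univ,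
    one_smul, integral_map hg hG.1]

end PushForward

theorem integrable_comp_of_ae_mem_compact {X Y : Type*} [MeasurableSpace X] [MetricSpace Y]
    [MeasurableSpace Y] [BorelSpace Y] {μ : Measure X} [IsFiniteMeasure μ] {φ : X → Y}
    {K : Set Y} (hK : IsCompact K) (hφ : AEMeasurable φ μ) (hφK : ∀ᵐ x ∂μ, φ x ∈ K)
    {F : Y → ℝ} (hF : Continuous F) : Integrable (fun x => F (φ x)) μ := by
  have hK' : ∀ᵐ y ∂μ.map φ, y ∈ K := (ae_map_iff hφ hK.isClosed.measurableSet).mpr hφK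
  rw [← Function.comp_def, ← integrable_map_measure hF.aestronglyMeasurable hφ,
    ← Measure.restrict_eq_self_of_ae_mem hK']
  exact hF.continuousOn.integrableOn_compact hK

theorem integrable_of_ae_mem_compact {Y : Type*} [MetricSpace Y] [MeasurableSpace Y]
    [BorelSpace Y] {μ : Measure Y} [IsFiniteMeasure μ] {K : Set Y} (hK : IsCompact K)
    (hμK : ∀ᵐ x ∂μ, x ∈ K) {F : Y → ℝ} (hF : Continuous F) : Integrable F μ :=
  integrable_comp_of_ae_mem_compact hK aemeasurable_id hμK hF

section Duality

variable {d : ℕ} {K : Set (Euc d)} {μ ν : Measure (Euc d)} [IsFiniteMeasure μ]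
  {T : Euc d → Euc d}

theorem integrable_norm_sub_apply (hK : IsCompact K) (hT : AEMeasurable T μ)
    (hμK : ∀ᵐ x ∂μ, x ∈ K) (hTK : ∀ᵐ x ∂μ, T x ∈ K) :
    Integrable (fun x => ‖x - T x‖) μ :=
  integrable_comp_of_ae_mem_compact (hK.prod hK) (aemeasurable_id.prodMk hT)
    (hμK.and hTK) (F := fun p => ‖p.1 - p.2‖) (by fun_prop)

theorem integral_sub_integral_eq_of_map {u : Euc d → ℝ} (hu : Continuous u)
    (hK : IsCompact K) (hT : AEMeasurable T μ) (hTν : μ.map T = ν)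
    (hμK : ∀ᵐ x ∂μ, x ∈ K) (hνK : ∀ᵐ y ∂ν, y ∈ K) :
    ∫ x, u x ∂μ - ∫ y, u y ∂ν = ∫ x, (u x - u (T x)) ∂μ := by
  subst hTν
  rw [integral_map hT hu.aestronglyMeasurable,
    integral_sub (integrable_of_ae_mem_compact hK hμK hu)
      (integrable_comp_of_ae_mem_compact hK hT (ae_of_ae_map hT hνK) hu)]

theorem integral_sub_integral_le_cost {u : Euc d → ℝ} (hu : LipschitzWith 1 u)
    (hK : IsCompact K) (hT : AEMeasurable T μ) (hTν : μ.map T = ν)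
    (hμK : ∀ᵐ x ∂μ, x ∈ K) (hνK : ∀ᵐ y ∂ν, y ∈ K) :
    ∫ x, u x ∂μ - ∫ y, u y ∂ν ≤ ∫ x, ‖x - T x‖ ∂μ := by
  have hTK : ∀ᵐ x ∂μ, T x ∈ K := ae_of_ae_map hT (hTν ▸ hνK)
  rw [integral_sub_integral_eq_of_map hu.continuous hK hT hTν hμK hνK]
  exact integral_mono
    ((integrable_of_ae_mem_compact hK hμK hu.continuous).sub
      (integrable_comp_of_ae_mem_compact hK hT hTK hu.continuous))
    (integrable_norm_sub_apply hK hT hμK hTK) fun x => hu.sub_le_norm_sub x (T x)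

theorem W1_le_cost (hK : IsCompact K) (hT : AEMeasurable T μ) (hTν : μ.map T = ν)
    (hμK : ∀ᵐ x ∂μ, x ∈ K) (hνK : ∀ᵐ y ∂ν, y ∈ K) :
    W1 μ ν ≤ ∫ x, ‖x - T x‖ ∂μ :=
  csSup_le ⟨_, fun _ => 0, LipschitzWith.const' 0, rfl⟩ fun _ ⟨_, hu, hr⟩ =>
    hr ▸ integral_sub_integral_le_cost hu hK hT hTν hμK hνK

theorem integral_sub_integral_le_W1 {u : Euc d → ℝ} (hu : LipschitzWith 1 u)
    (hK : IsCompact K) (hT : AEMeasurable T μ) (hTν : μ.map T = ν)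
    (hμK : ∀ᵐ x ∂μ, x ∈ K) (hνK : ∀ᵐ y ∂ν, y ∈ K) :
    ∫ x, u x ∂μ - ∫ y, u y ∂ν ≤ W1 μ ν :=
  le_csSup ⟨_, fun _ ⟨_, hw, hr⟩ => hr ▸ integral_sub_integral_le_cost hw hK hT hTν hμK hνK⟩
    ⟨u, hu, rfl⟩

theorem isOptimalMap_of_integral_sub_eq_cost {u : Euc d → ℝ} (hu : LipschitzWith 1 u)
    (hK : IsCompact K) (hT : AEMeasurable T μ) (hTν : μ.map T = ν)
    (hμK : ∀ᵐ x ∂μ, x ∈ K) (hνK : ∀ᵐ y ∂ν, y ∈ K)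
    (h : ∫ x, u x ∂μ - ∫ y, u y ∂ν = ∫ x, ‖x - T x‖ ∂μ) : IsOptimalMap T μ ν :=
  ⟨hTν, le_antisymm (h ▸ integral_sub_integral_le_W1 hu hK hT hTν hμK hνK)
    (W1_le_cost hK hT hTν hμK hνK)⟩

theorem IsOptimalMap.ae_sub_eq_norm {u : Euc d → ℝ} (hTopt : IsOptimalMap T μ ν)
    (hu : IsKantorovichPotential u μ ν) (hK : IsCompact K) (hT : AEMeasurable T μ)
    (hμK : ∀ᵐ x ∂μ, x ∈ K) (hνK : ∀ᵐ y ∂ν, y ∈ K) :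
    ∀ᵐ x ∂μ, u x - u (T x) = ‖x - T x‖ := by
  have hTK : ∀ᵐ x ∂μ, T x ∈ K := ae_of_ae_map hT (hTopt.1 ▸ hνK)
  have hgap : Integrable (fun x => u x - u (T x)) μ :=
    (integrable_of_ae_mem_compact hK hμK hu.1.continuous).sub
      (integrable_comp_of_ae_mem_compact hK hT hTK hu.1.continuous)
  have hzero : ∫ x, (‖x - T x‖ - (u x - u (T x))) ∂μ = 0 := by
    rw [integral_sub (integrable_norm_sub_apply hK hT hμK hTK) hgap,
      ← integral_sub_integral_eq_of_map hu.1.continuous hK hT hTopt.1 hμK hνK, hu.2, hTopt.2,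
      sub_self]
  have hnonneg : 0 ≤ᵐ[μ] fun x => ‖x - T x‖ - (u x - u (T x)) :=
    ae_of_all _ fun x => sub_nonneg.mpr (hu.1.sub_le_norm_sub x (T x))
  filter_upwards [(integral_eq_zero_iff_of_nonneg_ae hnonneg
    ((integrable_norm_sub_apply hK hT hμK hTK).sub hgap)).mp hzero] with x hx
  exact (sub_eq_zero.mp hx).symm

end Duality

theorem ae_ell0_le {d : ℕ} (T : Euc d → Euc d) (μ : Measure (Euc d)) :
    ∀ᵐ x ∂μ, ell0 T μ ≤ ‖x - T x‖ :=
  ae_essInf_le ⟨0, eventually_map.mpr (Eventually.of_forall fun _ => norm_nonneg _)⟩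

/-- The bound on `K` is needed because `essInf` in `ℝ` takes a junk value when `‖x - T x‖` is
not essentially bounded above. -/
theorem le_ell0_of_ae_le {d : ℕ} {K : Set (Euc d)} {μ : Measure (Euc d)} [NeZero μ]
    {T : Euc d → Euc d} (hK : Bornology.IsBounded K) (hμK : ∀ᵐ x ∂μ, x ∈ K)
    (hTK : ∀ᵐ x ∂μ, T x ∈ K) {c : ℝ} (h : ∀ᵐ x ∂μ, c ≤ ‖x - T x‖) : c ≤ ell0 T μ := by
  refine le_essInf_of_ae_le c h (IsBoundedUnder.isCoboundedUnder_ge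
    ⟨Metric.diam K, eventually_map.mpr ?_⟩)
  filter_upwards [hμK, hTK] with x hx hTx
  exact dist_eq_norm x (T x) ▸ Metric.dist_le_diam_of_mem hK hx hTx

section Shift

variable {d : ℕ} {K : Set (Euc d)} {μ ν : Measure (Euc d)} [IsProbabilityMeasure μ]
  {T f g : Euc d → Euc d} {u : Euc d → ℝ} {η : ℝ}

theorem IsOptimalMap.comp_of_ae_shift (hTopt : IsOptimalMap T μ ν)
    (hu : IsKantorovichPotential u μ ν) (hK : IsCompact K) (hT : AEMeasurable T μ)
    (hμK : ∀ᵐ x ∂μ, x ∈ K) (hνK : ∀ᵐ y ∂ν, y ∈ K) (hf : Measurable f) (hg : Measurable g)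
    (h : ∀ᵐ x ∂μ, g (f x) = x ∧ u (f x) = u x - η ∧ ‖f x - T x‖ = ‖x - T x‖ - η ∧ f x ∈ K) :
    IsOptimalMap (T ∘ g) (μ.map f) ν := by
  have := Measure.isProbabilityMeasure_map (μ := μ) hf.aemeasurable
  have hgf : ∀ᵐ x ∂μ, g (f x) = x := h.mono fun _ hx => hx.1
  have hμ : (μ.map f).map g = μ := map_map_eq_self_of_ae_leftInverse hf hg hgf
  have hback := ae_map_of_ae_leftInverse hf hg hgf h
  have hTg : AEMeasurable T ((μ.map f).map g) := by rwa [hμ]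
  have hTgν : (μ.map f).map (T ∘ g) = ν := by
    rw [← AEMeasurable.map_map_of_aemeasurable hTg hg.aemeasurable, hμ, hTopt.1]
  have hμK' : ∀ᵐ y ∂μ.map f, y ∈ K := hback.mono fun y hy => hy.1 ▸ hy.2.2.2.2
  refine isOptimalMap_of_integral_sub_eq_cost hu.1 hK (hTg.comp_measurable hg) hTgν hμK' hνK ?_
  have hpot : ∫ y, u y ∂μ.map f = ∫ x, u x ∂μ - η := by
    have hu_int : Integrable u ((μ.map f).map g) := by
      rw [hμ]; exact integrable_of_ae_mem_compact hK hμK hu.1.continuous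
    have key := integral_eq_integral_map_sub_const (F := u) (c := η) hg.aemeasurable hu_int
      (by filter_upwards [hback] with y hy; rw [← hy.2.2.1, hy.1])
    rwa [hμ] at key
  have hcost : ∫ y, ‖y - (T ∘ g) y‖ ∂μ.map f = ∫ x, ‖x - T x‖ ∂μ - η := by
    have hcost_int : Integrable (fun x => ‖x - T x‖) ((μ.map f).map g) := by
      rw [hμ]; exact integrable_norm_sub_apply hK hT hμK (ae_of_ae_map hT (hTopt.1 ▸ hνK))
    have key := integral_eq_integral_map_sub_const (F := fun y => ‖y - (T ∘ g) y‖) (c := η)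
      hg.aemeasurable hcost_int
      (by filter_upwards [hback] with y hy; rw [Function.comp_apply, ← hy.2.2.2.1, hy.1])
    rwa [hμ] at key
  rw [hpot, hcost, hTopt.2, ← hu.2]
  ring

theorem ell0_sub_le_ell0_comp_of_ae_shift (hK : Bornology.IsBounded K) (hT : AEMeasurable T μ)
    (hTν : μ.map T = ν) (hνK : ∀ᵐ y ∂ν, y ∈ K) (hf : Measurable f) (hg : Measurable g)
    (h : ∀ᵐ x ∂μ, g (f x) = x ∧ ‖f x - T x‖ = ‖x - T x‖ - η ∧ f x ∈ K) :
    ell0 T μ - η ≤ ell0 (T ∘ g) (μ.map f) := by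
  have := Measure.isProbabilityMeasure_map (μ := μ) hf.aemeasurable
  have hTK : ∀ᵐ x ∂μ, T x ∈ K := ae_of_ae_map hT (hTν ▸ hνK)
  have hback := ae_map_of_ae_leftInverse hf hg (h.mono fun _ hx => hx.1)
    ((h.and hTK).and (ae_ell0_le T μ))
  refine le_ell0_of_ae_le hK (hback.mono fun y hy => hy.1 ▸ hy.2.1.1.2.2)
    (hback.mono fun y hy => hy.2.1.2) ?_
  filter_upwards [hback] with y ⟨hfg, ⟨⟨_, hshift, _⟩, _⟩, hℓ⟩
  calc ell0 T μ - η ≤ ‖g y - T (g y)‖ - η := by linarith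
    _ = ‖y - (T ∘ g) y‖ := by rw [← hshift, hfg, Function.comp_apply]

end Shift

theorem measurable_of_eq_add_smul_gradient {d : ℕ} {u : Euc d → ℝ} {η : ℝ} {g : Euc d → Euc d}
    (hg : ∀ x, DifferentiableAt ℝ u x → g x = x + η • gradient u x)
    (hg' : ∀ x, ¬ DifferentiableAt ℝ u x → g x = x) : Measurable g := by
  have hgrad : Measurable (gradient u) :=
    (InnerProductSpace.toDual ℝ (Euc d)).symm.continuous.measurable.comp (measurable_fderiv ℝ u)
  have hg_eq : g = fun x => x + η • gradient u x := by
    funext x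
    by_cases hd : DifferentiableAt ℝ u x
    · exact hg x hd
    · rw [hg' x hd, gradient_eq_zero_of_not_differentiableAt hd, smul_zero, add_zero]
  exact hg_eq ▸ measurable_id.add (hgrad.const_smul η)

theorem composed_map_is_optimal_general {d : ℕ} (Ω : Set (Euc d))
    (hΩc : IsCompact Ω) (hΩconv : Convex ℝ Ω)
    (μ ν : Measure (Euc d)) [IsProbabilityMeasure μ] [IsProbabilityMeasure ν]
    (hμΩ : μ Ωᶜ = 0) (hνΩ : ν Ωᶜ = 0) (hac : μ ≪ volume)
    (u₀ : Euc d → ℝ) (hu₀ : IsKantorovichPotential u₀ μ ν)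
    (T₀ : Euc d → Euc d) (hT₀ : IsOptimalMap T₀ μ ν)
    (η₀ : ℝ) (hη₀pos : 0 < η₀) (hη₀ : η₀ < ell0 T₀ μ)
    (f₀ g₀ : Euc d → Euc d) (hf₀m : Measurable f₀)
    (hf₀ : ∀ x, DifferentiableAt ℝ u₀ x → f₀ x = x - η₀ • gradient u₀ x)
    (hg₀ : ∀ x, DifferentiableAt ℝ u₀ x → g₀ x = x + η₀ • gradient u₀ x)
    (hg₀' : ∀ x, ¬ DifferentiableAt ℝ u₀ x → g₀ x = x) :
    IsOptimalMap (T₀ ∘ g₀) (Measure.map f₀ μ) ν ∧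
      ell0 T₀ μ - η₀ ≤ ell0 (T₀ ∘ g₀) (Measure.map f₀ μ) := by
  have hT₀m : AEMeasurable T₀ μ := aemeasurable_of_map_neZero (by rw [hT₀.1]; infer_instance)
  have hμΩ' : ∀ᵐ x ∂μ, x ∈ Ω := mem_ae_iff.mpr hμΩ
  have hνΩ' : ∀ᵐ y ∂ν, y ∈ Ω := mem_ae_iff.mpr hνΩ
  have hT₀Ω : ∀ᵐ x ∂μ, T₀ x ∈ Ω := ae_of_ae_map hT₀m (hT₀.1 ▸ hνΩ')
  have hdiff : ∀ᵐ x ∂μ, DifferentiableAt ℝ u₀ x :=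
    hac.ae_le (hu₀.1.ae_differentiableAt (μ := volume))
  have hshift : ∀ᵐ x ∂μ, g₀ (f₀ x) = x ∧ u₀ (f₀ x) = u₀ x - η₀ ∧
      ‖f₀ x - T₀ x‖ = ‖x - T₀ x‖ - η₀ ∧ f₀ x ∈ Ω := by
    filter_upwards [hT₀.ae_sub_eq_norm hu₀ hΩc hT₀m hμΩ' hνΩ', hdiff, ae_ell0_le T₀ μ, hμΩ',
      hT₀Ω] with x hsat hd hℓ hx hTx
    obtain ⟨hgrad, hpot, hdist, hseg⟩ := hu₀.1.step_along_ray hsat hd hη₀pos (hη₀.trans_le hℓ)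
    rw [hf₀ x hd]
    exact ⟨by rw [hg₀ _ hgrad.differentiableAt, hgrad.gradient, sub_add_cancel], hpot, hdist,
      hΩconv.segment_subset hx hTx hseg⟩
  have hg₀m : Measurable g₀ := measurable_of_eq_add_smul_gradient hg₀ hg₀'
  exact ⟨hT₀.comp_of_ae_shift hu₀ hΩc hT₀m hμΩ' hνΩ' hf₀m hg₀m hshift,
    ell0_sub_le_ell0_comp_of_ae_shift hΩc.isBounded hT₀m hT₀.1 hνΩ' hf₀m hg₀m
      (hshift.mono fun _ hx => ⟨hx.1, hx.2.2⟩)⟩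

/-- `T₁ = T₀ ∘ g₀` is an optimal transport map for `((f₀)_#μ, ν)` and
`ℓ₀(T₁) ≥ ℓ₀(T₀) - η₀`. -/
theorem composed_map_is_optimal {d : ℕ} (Ω : Set (Euc d))
    (hΩc : IsCompact Ω) (hΩconv : Convex ℝ Ω)
    (μ ν : Measure (Euc d)) [IsProbabilityMeasure μ] [IsProbabilityMeasure ν]
    (hμΩ : μ Ωᶜ = 0) (hνΩ : ν Ωᶜ = 0) (hac : μ ≪ volume)
    (u₀ : Euc d → ℝ) (hu₀ : IsKantorovichPotential u₀ μ ν)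
    (T₀ : Euc d → Euc d) (hT₀ : IsOptimalMap T₀ μ ν)
    (η₀ : ℝ) (hη₀pos : 0 < η₀) (hη₀ : η₀ < ell0 T₀ μ)
    (f₀ g₀ : Euc d → Euc d) (hf₀m : Measurable f₀)
    (hf₀ : ∀ x, DifferentiableAt ℝ u₀ x → f₀ x = x - η₀ • gradient u₀ x)
    (hf₀' : ∀ x, ¬ DifferentiableAt ℝ u₀ x → f₀ x = x)
    (hg₀ : ∀ x, DifferentiableAt ℝ u₀ x → g₀ x = x + η₀ • gradient u₀ x)
    (hg₀' : ∀ x, ¬ DifferentiableAt ℝ u₀ x → g₀ x = x) :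
    IsOptimalMap (T₀ ∘ g₀) (Measure.map f₀ μ) ν ∧
      ell0 T₀ μ - η₀ ≤ ell0 (T₀ ∘ g₀) (Measure.map f₀ μ) :=
  composed_map_is_optimal_general Ω hΩc hΩconv μ ν hμΩ hνΩ hac u₀ hu₀ T₀ hT₀ η₀ hη₀pos hη₀ f₀ g₀
    hf₀m hf₀ hg₀ hg₀'
end
end

section
/- Let T₀ be an optimal transport map for (μ,ν) with μ ≪ Lebesgue, and suppose 0 < η < ℓ₀(T₀). Then for μ-almost all x₀, the minimization problem min_{x∈Ω} (1/2)|x − x₀|² + η·u₀(x) has a unique solution, given explicitly by x₁ = x₀ − η∇u₀(x₀), where u₀ is a Kantorovich potential for (μ,ν). -/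
/-!
Optimality of `T₀` and of `u₀` gives `∫ ‖x - T₀ x‖ dμ = ∫ u₀ dμ - ∫ u₀ ∘ T₀ dμ`; as `u₀` is
1-Lipschitz, the pointwise bound `u₀ x - u₀ (T₀ x) ≤ ‖x - T₀ x‖` is an equality μ-a.e., so `u₀`
decreases at unit rate along the segment `[x, T₀ x]`. Where `u₀` is also differentiable (μ-a.e. by
Rademacher, as `μ ≪ volume`), this forces `∇u₀ x` to be the unit vector pointing from `T₀ x` to
`x`. Since `η ≤ ‖x - T₀ x‖`, the point `x - η ∇u₀ x` lies on that segment, hence in `Ω`, and there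
`u₀` has dropped by exactly `η`. For a competitor at distance `t` from `x` the objective is at
least `t² / 2 + η (u₀ x - t)`, which is minimal only at `t = η`, and equality forces the
competitor onto the same ray.
-/

open MeasureTheory

noncomputable section

open Set
open scoped RealInnerProductSpace

namespace LipschitzWith

section NormedSpace

variable {E : Type*} [NormedAddCommGroup E] {u : E → ℝ}

theorem sub_le_norm_sub_s15 (hu : LipschitzWith 1 u) (x y : E) : u x - u y ≤ ‖x - y‖ := by
  have := hu.le_add_mul x y
  rw [NNReal.coe_one, one_mul, dist_eq_norm] at this
  linarith

variable [NormedSpace ℝ E]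

/-- Equality in the Lipschitz bound at the end of a segment propagates to the whole segment. -/
theorem sub_apply_add_smul_eq (hu : LipschitzWith 1 u) {x v : E} (hv : u x - u (x + v) = ‖v‖)
    {s : ℝ} (hs : s ∈ Icc (0 : ℝ) 1) : u x - u (x + s • v) = s * ‖v‖ := by
  have h₁ : u x - u (x + s • v) ≤ s * ‖v‖ := by
    simpa [norm_smul, abs_of_nonneg hs.1] using hu.sub_le_norm_sub_s15 x (x + s • v)
  have h₂ : u (x + s • v) - u (x + v) ≤ (1 - s) * ‖v‖ := by
    have hsv : x + s • v - (x + v) = (s - 1) • v := by module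
    simpa [hsv, norm_smul, abs_of_nonpos (sub_nonpos.2 hs.2)] using
      hu.sub_le_norm_sub_s15 (x + s • v) (x + v)
  linarith

theorem fderiv_apply_eq_neg_norm (hu : LipschitzWith 1 u) {x v : E}
    (hd : DifferentiableAt ℝ u x) (hv : u x - u (x + v) = ‖v‖) :
    fderiv ℝ u x v = -‖v‖ := by
  have hline : HasDerivAt (fun s : ℝ => x + s • v) v 0 := by
    simpa using ((hasDerivAt_id (0 : ℝ)).smul_const v).const_add x
  have hderiv : HasDerivAt (fun s : ℝ => u (x + s • v)) (fderiv ℝ u x v) 0 :=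
    hd.hasFDerivAt.comp_hasDerivAt_of_eq 0 hline (by simp)
  have haffine : HasDerivWithinAt (fun s : ℝ => u (x + s • v)) (-‖v‖) (Icc 0 1) 0 := by
    refine ((hasDerivAt_id (0 : ℝ)).const_mul (-‖v‖) |>.const_add (u x)).hasDerivWithinAt.congr
      (fun s hs => ?_) (by simp) |>.congr_deriv (by ring)
    simp only [id]
    linarith [hu.sub_apply_add_smul_eq hv hs]
  exact (uniqueDiffOn_Icc zero_lt_one 0 ⟨le_rfl, zero_le_one⟩).eq_deriv _ hderiv.hasDerivWithinAt
    haffine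

end NormedSpace

end LipschitzWith

section InnerProductSpace

variable {E : Type*} [NormedAddCommGroup E] [InnerProductSpace ℝ E]

theorem eq_neg_norm_smul_of_inner_eq_neg_norm {g v : E} (hg : ‖g‖ ≤ 1) (h : ⟪g, v⟫ = -‖v‖) :
    v = -(‖v‖ • g) := by
  rw [eq_neg_iff_add_eq_zero, ← norm_eq_zero, ← sq_eq_zero_iff]
  have hsq : ‖v + ‖v‖ • g‖ ^ 2 = ‖v‖ ^ 2 * (‖g‖ ^ 2 - 1) := by
    rw [norm_add_sq_real, real_inner_smul_right, real_inner_comm, h, norm_smul, Real.norm_of_nonneg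
      (norm_nonneg v)]
    ring
  have hg' : ‖g‖ ^ 2 ≤ 1 := pow_le_one₀ (norm_nonneg g) hg
  exact le_antisymm (hsq ▸ mul_nonpos_of_nonneg_of_nonpos (sq_nonneg _) (by linarith))
    (sq_nonneg _)

variable [CompleteSpace E] {u : E → ℝ}

namespace LipschitzWith

theorem norm_gradient_le_one (hu : LipschitzWith 1 u) (x : E) : ‖gradient u x‖ ≤ 1 := by
  rw [gradient, LinearIsometryEquiv.norm_map]
  exact_mod_cast norm_fderiv_le_of_lipschitz ℝ hu

theorem eq_neg_norm_smul_gradient (hu : LipschitzWith 1 u) {x v : E}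
    (hd : DifferentiableAt ℝ u x) (hv : u x - u (x + v) = ‖v‖) :
    v = -(‖v‖ • gradient u x) :=
  eq_neg_norm_smul_of_inner_eq_neg_norm (hu.norm_gradient_le_one x) <| by
    rw [inner_gradient_left, hu.fderiv_apply_eq_neg_norm hd hv]

theorem half_sq_norm_add_mul_lt (hu : LipschitzWith 1 u) {x₀ w : E}
    (hd : DifferentiableAt ℝ u x₀) (hw : u x₀ - u (x₀ + w) = ‖w‖) {x : E} (hx : x ≠ x₀ + w) :
    1 / 2 * ‖w‖ ^ 2 + ‖w‖ * u (x₀ + w) < 1 / 2 * ‖x - x₀‖ ^ 2 + ‖w‖ * u x := by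
  have hlip := hu.sub_le_norm_sub_s15 x₀ x
  rw [norm_sub_rev] at hlip
  by_contra! hle
  -- the gap is `(‖x - x₀‖ - ‖w‖) ^ 2 / 2 + ‖w‖ * (‖x - x₀‖ - (u x₀ - u x))`, a sum of two
  -- nonnegative terms; both vanish, so `x` also lies on the ray of steepest descent
  have hnorm : ‖x - x₀‖ = ‖w‖ := by nlinarith [norm_nonneg w]
  have hx' : u x₀ - u (x₀ + (x - x₀)) = ‖x - x₀‖ := by
    rcases (norm_nonneg w).eq_or_lt with hw0 | hw0
    · rw [← hw0, norm_eq_zero, sub_eq_zero] at hnorm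
      simp [hnorm]
    · rw [add_sub_cancel]
      nlinarith
  apply hx
  rw [← add_sub_cancel x₀ x, hu.eq_neg_norm_smul_gradient hd hx', hnorm,
    ← hu.eq_neg_norm_smul_gradient hd hw]

theorem sub_smul_gradient_mem_segment_and_lt (hu : LipschitzWith 1 u) {x₀ y : E}
    (hd : DifferentiableAt ℝ u x₀) (hy : u x₀ - u y = ‖x₀ - y‖) {η : ℝ} (hη₀ : 0 ≤ η)
    (hηy : η ≤ ‖x₀ - y‖) :
    x₀ - η • gradient u x₀ ∈ segment ℝ x₀ y ∧
      ∀ x ≠ x₀ - η • gradient u x₀,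
        1 / 2 * ‖(x₀ - η • gradient u x₀) - x₀‖ ^ 2 + η * u (x₀ - η • gradient u x₀)
          < 1 / 2 * ‖x - x₀‖ ^ 2 + η * u x := by
  set s := η / ‖x₀ - y‖
  have hs : s ∈ Icc (0 : ℝ) 1 :=
    ⟨div_nonneg hη₀ (norm_nonneg _), div_le_one_of_le₀ hηy (norm_nonneg _)⟩
  have hray : u x₀ - u (x₀ + (y - x₀)) = ‖y - x₀‖ := by rwa [add_sub_cancel, norm_sub_rev]
  have hw : u x₀ - u (x₀ + s • (y - x₀)) = ‖s • (y - x₀)‖ := by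
    rw [hu.sub_apply_add_smul_eq hray hs, norm_smul, Real.norm_of_nonneg hs.1]
  have hwη : ‖s • (y - x₀)‖ = η := by
    rw [norm_smul, Real.norm_of_nonneg hs.1, norm_sub_rev]
    exact div_mul_cancel_of_imp fun h => le_antisymm (h ▸ hηy) hη₀
  have hstep : x₀ - η • gradient u x₀ = x₀ + s • (y - x₀) := by
    rw [hu.eq_neg_norm_smul_gradient hd hw, hwη, sub_eq_add_neg]
  rw [hstep, add_sub_cancel_left, segment_eq_image']
  exact ⟨⟨s, hs, rfl⟩, fun x hx => hwη ▸ hu.half_sq_norm_add_mul_lt hd hw hx⟩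

end LipschitzWith

end InnerProductSpace

theorem Continuous.integrable_of_measure_compl_eq_zero {X F : Type*} [TopologicalSpace X]
    [T2Space X] [MeasurableSpace X] [OpensMeasurableSpace X] [NormedAddCommGroup F]
    {μ : Measure X} [IsFiniteMeasureOnCompacts μ] {K : Set X} {f : X → F} (hf : Continuous f)
    (hK : IsCompact K) (hμK : μ Kᶜ = 0) : Integrable f μ := by
  rw [← Measure.restrict_eq_self_of_ae_mem (mem_ae_iff.2 hμK)]
  exact hf.continuousOn.integrableOn_compact hK

theorem LipschitzWith.ae_sub_eq_norm_sub {E : Type*} [NormedAddCommGroup E] [MeasurableSpace E]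
    {μ ν : Measure E} {u : E → ℝ} {T : E → E} (hu : LipschitzWith 1 u) (hT : AEMeasurable T μ)
    (hTν : μ.map T = ν) (huμ : Integrable u μ) (huν : Integrable u ν)
    (hcost : Integrable (fun x => ‖x - T x‖) μ)
    (h : ∫ x, ‖x - T x‖ ∂μ = (∫ x, u x ∂μ) - ∫ y, u y ∂ν) :
    ∀ᵐ x ∂μ, u x - u (T x) = ‖x - T x‖ := by
  subst hTν
  have huT : Integrable (fun x => u (T x)) μ := huν.comp_aemeasurable hT
  have hdrop : Integrable (fun x => u x - u (T x)) μ := huμ.sub huT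
  have hgap : ∫ x, (‖x - T x‖ - (u x - u (T x))) ∂μ = 0 := by
    rw [integral_sub hcost hdrop, integral_sub huμ huT,
      ← integral_map hT huν.aestronglyMeasurable, h, sub_self]
  filter_upwards [(integral_eq_zero_iff_of_nonneg
    (fun x => sub_nonneg.2 (hu.sub_le_norm_sub_s15 x (T x))) (hcost.sub hdrop)).1 hgap]
    with x hx
  exact (sub_eq_zero.1 hx).symm

/-- for μ-a.e. `x₀`, the adversarial-regularization problem
`min_{x ∈ Ω} (1/2)|x - x₀|² + η u₀(x)` has `x₀ - η ∇u₀(x₀)` as its unique solution. -/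
theorem adversarial_reg_is_ttc_step {d : ℕ} (Ω : Set (Euc d))
    (hΩc : IsCompact Ω) (hΩconv : Convex ℝ Ω)
    (μ ν : Measure (Euc d)) [IsProbabilityMeasure μ] [IsProbabilityMeasure ν]
    (hμΩ : μ Ωᶜ = 0) (hνΩ : ν Ωᶜ = 0) (hac : μ ≪ volume)
    (u₀ : Euc d → ℝ) (hu₀ : IsKantorovichPotential u₀ μ ν)
    (T₀ : Euc d → Euc d) (hT₀ : IsOptimalMap T₀ μ ν)
    (η : ℝ) (hηpos : 0 < η) (hη : η < ell0 T₀ μ) :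
    ∀ᵐ x₀ ∂μ, DifferentiableAt ℝ u₀ x₀ ∧
      x₀ - η • gradient u₀ x₀ ∈ Ω ∧
      ∀ x ∈ Ω, x ≠ x₀ - η • gradient u₀ x₀ →
        (1 / 2) * ‖(x₀ - η • gradient u₀ x₀) - x₀‖ ^ 2
            + η * u₀ (x₀ - η • gradient u₀ x₀)
          < (1 / 2) * ‖x - x₀‖ ^ 2 + η * u₀ x := by
  obtain ⟨hu, hu_opt⟩ := hu₀
  obtain ⟨hTν, hT_opt⟩ := hT₀
  have hT : AEMeasurable T₀ μ := aemeasurable_of_map_neZero (by rw [hTν]; infer_instance)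
  have hintegrable {ρ : Measure (Euc d)} [IsFiniteMeasure ρ] (hρ : ρ Ωᶜ = 0) {F : Type}
      [NormedAddCommGroup F] {f : Euc d → F} (hf : Continuous f) : Integrable f ρ :=
    hf.integrable_of_measure_compl_eq_zero hΩc hρ
  have hTint : Integrable T₀ μ := (hTν ▸ hintegrable hνΩ continuous_id :
    Integrable id (μ.map T₀)).comp_aemeasurable hT
  have hcost : Integrable (fun x => ‖x - T₀ x‖) μ :=
    ((hintegrable hμΩ continuous_id).sub hTint).norm
  have hrays := hu.ae_sub_eq_norm_sub hT hTν (hintegrable hμΩ hu.continuous)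
    (hintegrable hνΩ hu.continuous) hcost (by rw [hT_opt, hu_opt])
  have hTΩ : ∀ᵐ x ∂μ, T₀ x ∈ Ω := ae_of_ae_map hT (hTν ▸ mem_ae_iff.2 hνΩ)
  have hlen : ∀ᵐ x ∂μ, η < ‖x - T₀ x‖ :=
    ae_lt_of_lt_essInf hη ⟨0, Filter.eventually_map.2 (.of_forall fun x => norm_nonneg _)⟩
  filter_upwards [hac.ae_le hu.ae_differentiableAt, mem_ae_iff.2 hμΩ, hTΩ, hrays, hlen]
    with x₀ hd hx₀ hTx₀ hray hlen
  obtain ⟨hmem, hmin⟩ := hu.sub_smul_gradient_mem_segment_and_lt hd hray hηpos.le hlen.le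
  exact ⟨hd, hΩconv.segment_subset hx₀ hTx₀ hmem, fun x _ hx => hmin x hx⟩
end
end
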